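/- arXiv:0911.2802 — 4 statements merged into one kernel-verified Lean document; each statement's English description precedes it below -/
import Mathlib

section
/- Let n ≥ 1 and let w : Fin (2n) → Fin 2 be a balanced binary word, i.e. S_{2n}(w) = 0. For any r with 0 ≤ r ≤ 2n, the rotation of w by r is a Dyck word if and only if S_r(w) = min { S_j(w) : 0 ≤ j ≤ 2n }. -/
/-!
The prefix sums of the rotation of `w` by `r` are the increments `S_{r+j} - S_r` of `w`, read
cyclically: once the rotated word runs past the end of `w` it starts over, and since `w` is
balanced a full turn adds `S_{2n} = 0`. Hence the prefix sums of the rotation are exactly the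
differences `S_k - S_r` for `k ≤ 2n`, and they are all nonnegative iff `S_r` is minimal.
-/

/-- The rotation of a word `w : Fin L → A` by `r` positions. -/
def rotate {L : ℕ} {A : Type*} (r : ℕ) (w : Fin L → A) : Fin L → A :=
  fun i => w ⟨((i : ℕ) + r) % L, Nat.mod_lt _ (Nat.lt_of_le_of_lt (Nat.zero_le _) i.isLt)⟩

/-- The `j`-th prefix sum of a binary word, where letter `0` counts `+1`
and letter `1` counts `-1`. -/
def prefixSum {L : ℕ} (w : Fin L → Fin 2) (j : ℕ) : ℤ :=
  ∑ i ∈ Finset.range j, if h : i < L then (if w ⟨i, h⟩ = 0 then 1 else -1) else 0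

def letterValue {L : ℕ} (w : Fin L → Fin 2) (i : ℕ) : ℤ :=
  if h : i < L then (if w ⟨i, h⟩ = 0 then 1 else -1) else 0

section

variable {L : ℕ} (w : Fin L → Fin 2)

theorem prefixSum_eq_sum_letterValue (j : ℕ) :
    prefixSum w j = ∑ i ∈ Finset.range j, letterValue w i :=
  rfl

theorem prefixSum_add (a b : ℕ) :
    prefixSum w (a + b) = prefixSum w a + ∑ i ∈ Finset.range b, letterValue w (a + i) :=
  Finset.sum_range_add _ a b

theorem letterValue_rotate (r : ℕ) {i : ℕ} (hi : i < L) :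
    letterValue (rotate r w) i = letterValue w ((i + r) % L) := by
  simp only [letterValue, dif_pos hi, dif_pos (Nat.mod_lt _ (Nat.zero_lt_of_lt hi))]
  rfl

variable {w}

theorem prefixSum_rotate_of_add_le {r j : ℕ} (h : r + j ≤ L) :
    prefixSum (rotate r w) j = prefixSum w (r + j) - prefixSum w r := by
  rw [prefixSum_add, add_sub_cancel_left, prefixSum_eq_sum_letterValue]
  refine Finset.sum_congr rfl fun i hi => ?_
  have hi : i < j := Finset.mem_range.mp hi
  rw [letterValue_rotate w r (by omega), Nat.mod_eq_of_lt (by omega), add_comm]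

theorem prefixSum_rotate_of_le_add {r j : ℕ} (hr : r ≤ L) (hj : j ≤ L) (h : L ≤ r + j) :
    prefixSum (rotate r w) j = prefixSum w L - prefixSum w r + prefixSum w (r + j - L) := by
  obtain ⟨k, rfl⟩ : ∃ k, j = (L - r) + k := ⟨j - (L - r), by omega⟩
  rw [prefixSum_add, prefixSum_rotate_of_add_le (by omega), Nat.add_sub_cancel' hr,
    show r + (L - r + k) - L = k by omega, prefixSum_eq_sum_letterValue w k]
  congr 1
  refine Finset.sum_congr rfl fun i hi => ?_
  have hi : i < k := Finset.mem_range.mp hi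
  rw [letterValue_rotate w r (by omega), show L - r + i + r = i + L by omega,
    Nat.add_mod_right, Nat.mod_eq_of_lt (by omega)]

theorem forall_prefixSum_rotate_nonneg_iff (hbal : prefixSum w L = 0) {r : ℕ} (hr : r ≤ L) :
    (∀ j ≤ L, 0 ≤ prefixSum (rotate r w) j) ↔ ∀ k ≤ L, prefixSum w r ≤ prefixSum w k := by
  constructor
  · intro hdyck k hk
    rcases le_or_gt r k with hrk | hkr
    · have := hdyck (k - r) (by omega)
      rwa [prefixSum_rotate_of_add_le (by omega), Nat.add_sub_cancel' hrk, sub_nonneg] at this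
    · have := hdyck (k + L - r) (by omega)
      rwa [prefixSum_rotate_of_le_add hr (by omega) (by omega), hbal,
        show r + (k + L - r) - L = k by omega, zero_sub, neg_add_eq_sub, sub_nonneg] at this
  · intro hmin j hj
    rcases le_or_gt (r + j) L with h | h
    · rw [prefixSum_rotate_of_add_le h, sub_nonneg]
      exact hmin _ h
    · rw [prefixSum_rotate_of_le_add hr hj h.le, hbal, zero_sub, neg_add_eq_sub, sub_nonneg]
      exact hmin _ (by omega)

end

/-- For a balanced binary word `w` of length `2n`, the rotation of `w` by `r` is a Dyck word
(all prefix sums nonnegative) iff `S_r(w)` is the minimum of the prefix sums of `w`. -/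
theorem rotation_isDyck_iff_min
    (n : ℕ) (w : Fin (2 * n) → Fin 2)
    (hbal : prefixSum w (2 * n) = 0)
    (r : ℕ) (hr : r ≤ 2 * n) :
    (∀ j ≤ 2 * n, 0 ≤ prefixSum (rotate r w) j) ↔
      prefixSum w r =
        (Finset.range (2 * n + 1)).inf'
          (Finset.nonempty_range_iff.mpr (by omega)) (fun j => prefixSum w j) := by
  rw [forall_prefixSum_rotate_nonneg_iff hbal hr, le_antisymm_iff,
    and_iff_left (Finset.inf'_le _ (Finset.mem_range.mpr (by omega))), Finset.le_inf'_iff]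
  simp only [Finset.mem_range, Nat.lt_succ_iff]
end

section
/- Let n ≥ 1. Consider on binary words of length 2n the rotation-equivalence relation (two words are equivalent iff one is a rotation of the other). The map sending a Dyck word of length 2n to its rotation-equivalence class of balanced words induces a bijection between the quotient of the set of Dyck words of length 2n by (the restriction of) rotation-equivalence and the set of rotation-equivalence classes of balanced binary words of length 2n. (Raney's lemma: (1,1)-balanced necklaces correspond to cycles of indecomposable Dyck paths.) -/
/-- Rotation-equivalence of words: `w'` is a rotation of `w`. -/
def rotEquiv {L : ℕ} {A : Type*} (w w' : Fin L → A) : Prop :=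
  ∃ r : ℕ, w' = rotate r w

/-- `w` is balanced: its total sum of `±1` steps is zero. -/
def isBalanced {L : ℕ} (w : Fin L → Fin 2) : Prop :=
  prefixSum w L = 0

/-- `w` is a Dyck word: it is balanced and all its prefix sums are nonnegative. -/
def isDyck {L : ℕ} (w : Fin L → Fin 2) : Prop :=
  isBalanced w ∧ ∀ j ≤ L, 0 ≤ prefixSum w j

/-! Cycle lemma: read a balanced word periodically and rotate it to start right after a position
where its prefix sum is minimal; since a full period sums to zero, every prefix sum of the rotated
word is nonnegative. So each balanced rotation class contains a Dyck word, and since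
rotation-equivalence is already an equivalence relation, two Dyck words are identified among
Dyck words exactly when they are identified among balanced words. -/

theorem Quot.map_subtypeMap_bijective {α : Type*} {r : α → α → Prop} (hr : Equivalence r)
    {p q : α → Prop} (hpq : ∀ a, p a → q a) (hq : ∀ a, q a → ∃ b, p b ∧ r a b) :
    Function.Bijective (Quot.map (Subtype.map id hpq) fun _ _ h => h :
      Quot (fun a b : Subtype p => r a b) → Quot (fun a b : Subtype q => r a b)) := by
  constructor
  · rintro ⟨a⟩ ⟨b⟩ hab
    exact Quot.sound
      (((hr.comap Subtype.val).quot_mk_eq_iff (Subtype.map id hpq a) (Subtype.map id hpq b)).mp hab)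
  · rintro ⟨a, ha⟩
    obtain ⟨b, hb, hab⟩ := hq a ha
    exact ⟨Quot.mk _ ⟨b, hb⟩, Quot.sound (hr.symm hab)⟩

section Rotation

variable {L : ℕ} {A : Type*}

theorem rotate_zero (w : Fin L → A) : rotate 0 w = w := by
  funext i
  simp [rotate, Nat.mod_eq_of_lt i.isLt]

theorem rotate_rotate (r s : ℕ) (w : Fin L → A) : rotate s (rotate r w) = rotate (r + s) w := by
  funext i
  simp only [rotate, Nat.mod_add_mod]
  congr 2
  ac_rfl

theorem rotate_congr {r s : ℕ} (h : r ≡ s [MOD L]) (w : Fin L → A) :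
    rotate r w = rotate s w := by
  funext i
  exact congrArg w (Fin.ext (Nat.ModEq.add_left i h))

theorem rotEquiv_equivalence : Equivalence (@rotEquiv L A) where
  refl w := ⟨0, (rotate_zero w).symm⟩
  symm := by
    rintro w _ ⟨r, rfl⟩
    rcases L.eq_zero_or_pos with rfl | hL
    · exact ⟨0, Subsingleton.elim _ _⟩
    refine ⟨L * r - r, ?_⟩
    have hr : r + (L * r - r) = L * r := Nat.add_sub_cancel' (Nat.le_mul_of_pos_left r hL)
    rw [rotate_rotate, hr, rotate_congr (Nat.modEq_zero_iff_dvd.mpr (dvd_mul_right L r)),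
      rotate_zero]
  trans := by
    rintro w _ _ ⟨r, rfl⟩ ⟨s, rfl⟩
    exact ⟨r + s, rotate_rotate r s w⟩

end Rotation

section CycleLemma

variable {L : ℕ}

/-- The guard `i % L < L` fails only for `L = 0`, where `Fin L` is empty. -/
def periodicStep (w : Fin L → Fin 2) (i : ℕ) : ℤ :=
  if h : i % L < L then (if w ⟨i % L, h⟩ = 0 then 1 else -1) else 0

def periodicPrefixSum (w : Fin L → Fin 2) (m : ℕ) : ℤ :=
  ∑ i ∈ Finset.range m, periodicStep w i

theorem prefixSum_eq_periodicPrefixSum (w : Fin L → Fin 2) {j : ℕ} (hj : j ≤ L) :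
    prefixSum w j = periodicPrefixSum w j := by
  refine Finset.sum_congr rfl fun i hi => ?_
  have hiL : i < L := (Finset.mem_range.mp hi).trans_le hj
  simp [periodicStep, hiL, Nat.mod_eq_of_lt hiL]

theorem prefixSum_rotate (w : Fin L → Fin 2) (r : ℕ) {j : ℕ} (hj : j ≤ L) :
    prefixSum (rotate r w) j = periodicPrefixSum w (r + j) - periodicPrefixSum w r := by
  rw [periodicPrefixSum, Finset.sum_range_add, ← periodicPrefixSum, add_sub_cancel_left]
  refine Finset.sum_congr rfl fun i hi => ?_
  have hiL : i < L := (Finset.mem_range.mp hi).trans_le hj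
  simp [rotate, periodicStep, hiL, Nat.mod_lt _ (i.zero_le.trans_lt hiL), Nat.add_comm i r]

theorem periodicPrefixSum_add_period {w : Fin L → Fin 2} (hw : isBalanced w) (m : ℕ) :
    periodicPrefixSum w (m + L) = periodicPrefixSum w m := by
  rw [Nat.add_comm, periodicPrefixSum, Finset.sum_range_add, ← periodicPrefixSum,
    ← prefixSum_eq_periodicPrefixSum w le_rfl, hw, zero_add, periodicPrefixSum]
  simp [periodicStep, Nat.add_mod_left]

theorem exists_isDyck_rotate {w : Fin L → Fin 2} (hw : isBalanced w) :
    ∃ r, isDyck (rotate r w) := by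
  obtain ⟨r, hr, hmin⟩ := Finset.exists_min_image (Finset.range (L + 1))
    (periodicPrefixSum w) ⟨0, by simp⟩
  have hrL : r ≤ L := Nat.lt_succ_iff.mp (Finset.mem_range.mp hr)
  have hmin' : ∀ m ≤ L, periodicPrefixSum w r ≤ periodicPrefixSum w m := fun m hm =>
    hmin m (Finset.mem_range.mpr (Nat.lt_succ_of_le hm))
  -- `r + j ≤ 2 * L`, so one period shift brings the end of the window back into `[0, L]`.
  have hnonneg : ∀ j ≤ L, 0 ≤ prefixSum (rotate r w) j := by
    intro j hj
    rw [prefixSum_rotate w r hj, sub_nonneg]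
    by_cases hrj : r + j ≤ L
    · exact hmin' _ hrj
    · rw [show r + j = (r + j - L) + L by omega, periodicPrefixSum_add_period hw]
      exact hmin' _ (by omega)
  refine ⟨r, ?_, hnonneg⟩
  rw [isBalanced, prefixSum_rotate w r le_rfl, periodicPrefixSum_add_period hw, sub_self]

end CycleLemma

theorem raney_bijection_general (n : ℕ) :
    ∃ e : Quot (fun d d' : {w : Fin (2 * n) → Fin 2 // isDyck w} => rotEquiv d.1 d'.1) ≃
          Quot (fun b b' : {w : Fin (2 * n) → Fin 2 // isBalanced w} => rotEquiv b.1 b'.1),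
      ∀ d : {w : Fin (2 * n) → Fin 2 // isDyck w},
        e (Quot.mk _ d) = Quot.mk _ ⟨d.1, d.2.1⟩ := by
  have hdyck (w : Fin (2 * n) → Fin 2) (hw : isBalanced w) : ∃ d, isDyck d ∧ rotEquiv w d := by
    obtain ⟨r, hr⟩ := exists_isDyck_rotate hw
    exact ⟨rotate r w, hr, r, rfl⟩
  exact ⟨Equiv.ofBijective _
    (Quot.map_subtypeMap_bijective rotEquiv_equivalence (fun _ hw => hw.1) hdyck),
    fun _ => rfl⟩

/-- Raney's lemma: the map sending a Dyck word of length `2n` to its rotation-equivalence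
class of balanced words induces a bijection between the quotient of Dyck words by
(the restriction of) rotation-equivalence and the set of rotation-equivalence classes of
balanced binary words of length `2n`. -/
theorem raney_bijection (n : ℕ) (hn : 1 ≤ n) :
    ∃ e : Quot (fun d d' : {w : Fin (2 * n) → Fin 2 // isDyck w} => rotEquiv d.1 d'.1) ≃
          Quot (fun b b' : {w : Fin (2 * n) → Fin 2 // isBalanced w} => rotEquiv b.1 b'.1),
      ∀ d : {w : Fin (2 * n) → Fin 2 // isDyck w},
        e (Quot.mk _ d) = Quot.mk _ ⟨d.1, d.2.1⟩ :=
  raney_bijection_general n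
end

section
/- Let c : ℕ → ℝ satisfy c n ≥ 0 for all n, c 0 = 0, and c n > 0 for at least one n. Let x > 0 be such that the series Σ_{n≥1} n · c n · x^n is summable, and set C(x) = Σ_{n≥1} c n · x^n and C•(y) = Σ_{n≥1} n · c n · y^n. Then the function f_x(u) = C•(x·u) / (u · C(x)) is a probability density on [0,1]: f_x(u) ≥ 0 for all u ∈ (0,1], and ∫_{u=0}^{1} C•(x·u)/(u · C(x)) du = 1. -/
/-! Dividing by `u` turns the pointed series into `∑ n (c_n xⁿ) uⁿ⁻¹`, whose `n`-th term
integrates over `[0,1]` to `c_n xⁿ` (for `n = 0` because `c_0 = 0`). The terms are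
nonnegative and these integrals sum to `C(x) < ∞`, so the series may be integrated termwise,
giving `C(x) / C(x) = 1`. -/

open MeasureTheory Set

lemma Summable.of_natCast_mul {a : ℕ → ℝ} (ha : ∀ n, 0 ≤ a n)
    (h : Summable fun n : ℕ => (n : ℝ) * a n) : Summable a := by
  refine (summable_nat_add_iff 1).mp <|
    (h.comp_injective (add_left_injective 1)).of_nonneg_of_le (fun n => ha _) fun n => ?_
  simp only [Function.comp_apply, Nat.cast_add, Nat.cast_one]
  nlinarith [ha (n + 1), n.cast_nonneg (α := ℝ)]

lemma tsum_natCast_mul_mul_pow_div {a : ℕ → ℝ} {u : ℝ} (hu : u ≠ 0) :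
    (∑' n : ℕ, n * a n * u ^ n) / u = ∑' n : ℕ, n * a n * u ^ (n - 1) := by
  rw [← tsum_div_const]
  refine tsum_congr fun n => ?_
  cases n with
  | zero => simp
  | succ n => rw [pow_succ, Nat.add_sub_cancel]; field_simp

lemma setIntegral_Ioc_natCast_mul_mul_pow_pred {a : ℕ → ℝ} (ha0 : a 0 = 0) (n : ℕ) :
    ∫ u in Ioc (0 : ℝ) 1, n * a n * u ^ (n - 1) = a n := by
  rw [← intervalIntegral.integral_of_le zero_le_one]
  cases n with
  | zero => simp [ha0]
  | succ n =>
    rw [Nat.add_sub_cancel, intervalIntegral.integral_const_mul, integral_pow]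
    push_cast
    field_simp
    ring

lemma integral_tsum_natCast_mul_mul_pow_pred {a : ℕ → ℝ} (ha0 : a 0 = 0)
    (ha : Summable fun n => |a n|) :
    ∫ u in (0 : ℝ)..1, ∑' n : ℕ, n * a n * u ^ (n - 1) = ∑' n, a n := by
  have hnorm : ∀ n : ℕ, ∫ u in Ioc (0 : ℝ) 1, ‖n * a n * u ^ (n - 1)‖ = |a n| := fun n => by
    rw [← setIntegral_Ioc_natCast_mul_mul_pow_pred (a := fun n => |a n|) (by simp [ha0]) n]
    refine setIntegral_congr_fun measurableSet_Ioc fun u hu => ?_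
    simp [abs_of_nonneg hu.1.le]
  rw [intervalIntegral.integral_of_le zero_le_one, ← integral_tsum_of_summable_integral_norm,
    tsum_congr (setIntegral_Ioc_natCast_mul_mul_pow_pred ha0)]
  · exact fun n => (by fun_prop : Continuous fun u : ℝ => n * a n * u ^ (n - 1)).integrableOn_Ioc
  · simpa only [hnorm] using ha

/-- For a generating function `C(x) = Σ c_n x^n` with nonnegative coefficients, `c 0 = 0`
and some positive coefficient, and `x > 0` in the convergence disc of the pointed series
`C•(y) = Σ n c_n y^n`, the function `u ↦ C•(x·u)/(u·C(x))` is a probability density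
on `[0,1]`. -/
theorem pointed_density
    (c : ℕ → ℝ) (hc : ∀ n, 0 ≤ c n) (hc0 : c 0 = 0) (hpos : ∃ n, 0 < c n)
    (x : ℝ) (hx : 0 < x)
    (hsum : Summable (fun n : ℕ => (n : ℝ) * c n * x ^ n)) :
    (∀ u ∈ Set.Ioc (0 : ℝ) 1,
      0 ≤ (∑' n : ℕ, (n : ℝ) * c n * (x * u) ^ n) / (u * ∑' n : ℕ, c n * x ^ n)) ∧
    ∫ u in (0 : ℝ)..1,
        (∑' n : ℕ, (n : ℝ) * c n * (x * u) ^ n) / (u * ∑' n : ℕ, c n * x ^ n) = 1 := by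
  have hterm : ∀ n, 0 ≤ c n * x ^ n := fun n => mul_nonneg (hc n) (pow_nonneg hx.le n)
  have hC : Summable fun n => c n * x ^ n :=
    .of_natCast_mul hterm (by simpa only [mul_assoc] using hsum)
  obtain ⟨m, hm⟩ := hpos
  have hCpos : 0 < ∑' n, c n * x ^ n := hC.tsum_pos hterm m (mul_pos hm (pow_pos hx m))
  refine ⟨fun u hu => div_nonneg (tsum_nonneg fun n => ?_) (mul_nonneg hu.1.le hCpos.le), ?_⟩
  · exact mul_nonneg (mul_nonneg n.cast_nonneg (hc n)) (pow_nonneg (mul_pos hx hu.1).le n)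
  have hdensity : ∀ u ∈ Ioc (0 : ℝ) 1,
      (∑' n : ℕ, (n : ℝ) * c n * (x * u) ^ n) / (u * ∑' n : ℕ, c n * x ^ n) =
        (∑' n : ℕ, n * (c n * x ^ n) * u ^ (n - 1)) / ∑' n : ℕ, c n * x ^ n := by
    intro u hu
    have h := tsum_natCast_mul_mul_pow_div (a := fun n => c n * x ^ n) hu.1.ne'
    simp only [mul_pow, ← mul_assoc] at h ⊢
    rw [← div_div, h]
  rw [intervalIntegral.integral_congr_ae (ae_of_all _ fun u hu => hdensity u (by simpa using hu)),
    intervalIntegral.integral_div, integral_tsum_natCast_mul_mul_pow_pred (by simp [hc0]) hC.abs,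
    div_self hCpos.ne']
end

section
/- Let c : ℕ → ℝ satisfy c n ≥ 0 for all n, with c n > 0 for at least one n ≥ 1. Let x > 0 be such that Σ_{n≥1} n · c n · x^n is summable; set C(x) = Σ_{n≥0} c n · x^n and C•(y) = Σ_{n≥1} n · c n · y^n. Then for every N ≥ 1, (1 − c 0 / C(x)) · ∫_{u=0}^{1} ( C•(x·u) / (u · (C(x) − c 0)) ) · ( N · c N · (u·x)^N / C•(x·u) ) du = c N · x^N / C(x). (Hence first drawing u according to the density C•(x·u)/(u·(C(x) − c 0)), returning a uniform size-0 object with probability c 0/C(x), and otherwise running a Boltzmann sampler for the pointed class ΘC at parameter u·x and forgetting the point, yields a valid Boltzmann sampler for C at parameter x.) -/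
/-!
On `0 < u ≤ 1` the pointed generating function `C•(x u)` cancels between the density of `u`
and the probability that the pointed sampler outputs size `N`, leaving the monomial
`N c_N x^N u^(N-1) / (C(x) - c 0)`, whose integral over `[0, 1]` is `c_N x^N / (C(x) - c 0)`.
The factor `1 - c 0 / C(x) = (C(x) - c 0) / C(x)` then turns this into `c_N x^N / C(x)`.
-/

lemma summable_mul_pow_of_abs_le {a : ℕ → ℝ} {x y : ℝ} (h : Summable fun n => a n * x ^ n)
    (hyx : |y| ≤ |x|) : Summable fun n => a n * y ^ n :=
  h.abs.of_norm_bounded fun n => by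
    simp only [Real.norm_eq_abs, abs_mul, abs_pow]
    gcongr

lemma summable_mul_pow_of_summable_nat_mul {c : ℕ → ℝ} {x : ℝ}
    (h : Summable fun n : ℕ => (n : ℝ) * c n * x ^ n) : Summable fun n => c n * x ^ n := by
  refine h.abs.of_norm_bounded_eventually_nat (Filter.eventually_atTop.2 ⟨1, fun n hn => ?_⟩)
  have hn : (1 : ℝ) ≤ n := by exact_mod_cast hn
  rw [Real.norm_eq_abs, mul_assoc, abs_mul (n : ℝ), Nat.abs_cast]
  exact le_mul_of_one_le_left (abs_nonneg _) hn

lemma coeff_zero_add_mul_pow_le_tsum {c : ℕ → ℝ} (hc : ∀ n, 0 ≤ c n) {x : ℝ} (hx : 0 ≤ x)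
    (h : Summable fun n => c n * x ^ n) {N : ℕ} (hN : 1 ≤ N) :
    c 0 + c N * x ^ N ≤ ∑' n, c n * x ^ n := by
  have hsum := h.sum_le_tsum {0, N} fun n _ => mul_nonneg (hc n) (pow_nonneg hx n)
  rwa [Finset.sum_pair (by omega), pow_zero, mul_one] at hsum

lemma pointed_weight_mul_prob_eq {c : ℕ → ℝ} (hc : ∀ n, 0 ≤ c n) {x : ℝ} (hx : 0 < x)
    (hsum : Summable fun n : ℕ => (n : ℝ) * c n * x ^ n) {N : ℕ} (hN : 1 ≤ N) (hcN : 0 < c N)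
    (D : ℝ) {u : ℝ} (hu : u ∈ Set.Ioc 0 1) :
    (∑' n : ℕ, (n : ℝ) * c n * (x * u) ^ n) / (u * D) *
        ((N : ℝ) * c N * (u * x) ^ N / ∑' n : ℕ, (n : ℝ) * c n * (x * u) ^ n)
      = (N : ℝ) * c N * x ^ N / D * u ^ (N - 1) := by
  obtain ⟨hu0, hu1⟩ := hu
  have hxu : 0 < x * u := mul_pos hx hu0
  have hsum_xu : Summable fun n : ℕ => (n : ℝ) * c n * (x * u) ^ n :=
    summable_mul_pow_of_abs_le hsum (by
      rw [abs_of_pos hx, abs_of_pos hxu]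
      exact mul_le_of_le_one_right hx.le hu1)
  have hpointed_pos : 0 < ∑' n : ℕ, (n : ℝ) * c n * (x * u) ^ n :=
    calc 0 < (N : ℝ) * c N * (x * u) ^ N := by
          have : (0 : ℝ) < N := by exact_mod_cast hN
          positivity
      _ ≤ _ := hsum_xu.le_tsum N fun n _ => by have := hc n; positivity
  obtain ⟨M, rfl⟩ : ∃ M, N = M + 1 := ⟨N - 1, by omega⟩
  rw [Nat.add_sub_cancel, mul_comm u x]
  field_simp
  ring

theorem pointed_to_plain_boltzmann_general
    (c : ℕ → ℝ) (hc : ∀ n, 0 ≤ c n)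
    (x : ℝ) (hx : 0 < x)
    (hsum : Summable (fun n : ℕ => (n : ℝ) * c n * x ^ n))
    (N : ℕ) (hN : 1 ≤ N) :
    (1 - c 0 / ∑' n : ℕ, c n * x ^ n) *
        ∫ u in (0 : ℝ)..1,
          ((∑' n : ℕ, (n : ℝ) * c n * (x * u) ^ n) /
              (u * ((∑' n : ℕ, c n * x ^ n) - c 0))) *
            ((N : ℝ) * c N * (u * x) ^ N / ∑' n : ℕ, (n : ℝ) * c n * (x * u) ^ n)
      = c N * x ^ N / ∑' n : ℕ, c n * x ^ n := by
  rcases (hc N).eq_or_lt with hcN | hcN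
  · simp [← hcN]
  set C := ∑' n : ℕ, c n * x ^ n
  have hC : c 0 + c N * x ^ N ≤ C := coeff_zero_add_mul_pow_le_tsum hc hx.le
    (summable_mul_pow_of_summable_nat_mul hsum) hN
  have hxN : 0 < c N * x ^ N := by positivity
  have hC0 : 0 < C := by linarith [hc 0]
  have hD : 0 < C - c 0 := by linarith
  have hN0 : (N : ℝ) ≠ 0 := Nat.cast_ne_zero.2 (by omega)
  rw [intervalIntegral.integral_congr_ae (Filter.Eventually.of_forall fun u hu =>
      pointed_weight_mul_prob_eq hc hx hsum hN hcN (C - c 0) (by simpa using hu)),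
    intervalIntegral.integral_const_mul, integral_pow, Nat.sub_add_cancel hN, one_pow,
    zero_pow (by omega), sub_zero, Nat.cast_sub hN, Nat.cast_one, sub_add_cancel,
    one_sub_div hC0.ne']
  field_simp

/-- Correctness of the Boltzmann sampler for `C` obtained from a Boltzmann sampler for the
pointed class `ΘC`: drawing `u` with density `C•(x·u)/(u·(C(x) − c 0))`, returning a size-0
object with probability `c 0 / C(x)`, and otherwise sampling `ΘC` at parameter `u·x` and
forgetting the point, outputs size `N` with the Boltzmann probability `c_N x^N / C(x)`. -/
theorem pointed_to_plain_boltzmann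
    (c : ℕ → ℝ) (hc : ∀ n, 0 ≤ c n) (hpos : ∃ n, 1 ≤ n ∧ 0 < c n)
    (x : ℝ) (hx : 0 < x)
    (hsum : Summable (fun n : ℕ => (n : ℝ) * c n * x ^ n))
    (N : ℕ) (hN : 1 ≤ N) :
    (1 - c 0 / ∑' n : ℕ, c n * x ^ n) *
        ∫ u in (0 : ℝ)..1,
          ((∑' n : ℕ, (n : ℝ) * c n * (x * u) ^ n) /
              (u * ((∑' n : ℕ, c n * x ^ n) - c 0))) *
            ((N : ℝ) * c N * (u * x) ^ N / ∑' n : ℕ, (n : ℝ) * c n * (x * u) ^ n)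
      = c N * x ^ N / ∑' n : ℕ, c n * x ^ n :=
  pointed_to_plain_boltzmann_general c hc x hx hsum N hN
end
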